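/- Let θ > 1 and let u : ℝ → ℝ be a function, with abbreviations S(R) = sup over B_R of u and I(R) = inf over B_R of u (B_R balls in a metric space, centered at a fixed point o). Suppose: (a) I(R) = o(R) and I(4R) = o(R) as R → ∞ with I(R) ≤ u(o); and (b) for all R > 0, min{S(R), u(o) + R} ≤ θ·max{I(R), u(o) − R} + (θ−1)(1 − I(4R)). Then S(R) = o(R) as R → ∞. -/
import Mathlib


open Real Filter

theorem stmt_9 (θ u₀ : ℝ) (hθ : 1 < θ) (S I : ℝ → ℝ)
    (hI : Tendsto (fun R => I R / R) atTop (nhds 0))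
    (hI4 : Tendsto (fun R => I (4 * R) / R) atTop (nhds 0))
    (hIu : ∀ R > 0, I R ≤ u₀)
    (hSu : ∀ R > 0, u₀ ≤ S R)
    (hHarnack : ∀ R > 0,
      min (S R) (u₀ + R) ≤ θ * max (I R) (u₀ - R) + (θ - 1) * (1 - I (4 * R))) :
    Tendsto (fun R => S R / R) atTop (nhds 0) := by
  set B : ℝ → ℝ := fun R => θ * max (I R) (u₀ - R) + (θ - 1) * (1 - I (4 * R)) with hB
  have hinv : Tendsto (fun R : ℝ => u₀ / R) atTop (nhds 0) :=
    tendsto_const_nhds.div_atTop tendsto_id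
  have hone : Tendsto (fun R : ℝ => (1 : ℝ) / R) atTop (nhds 0) :=
    tendsto_const_nhds.div_atTop tendsto_id
  have hmax : Tendsto (fun R => max (I R) (u₀ - R) / R) atTop (nhds 0) := by
    have h1 : Tendsto (fun R : ℝ => (u₀ - R) / R) atTop (nhds (-1)) := by
      have heq : (fun R : ℝ => (u₀ - R) / R) =ᶠ[atTop] fun R => u₀ / R - 1 := by
        filter_upwards [eventually_gt_atTop (0 : ℝ)] with R hR
        field_simp
      rw [tendsto_congr' heq]
      simpa using hinv.sub (tendsto_const_nhds : Tendsto (fun _ : ℝ => (1:ℝ)) atTop _)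
    have h2 := hI.max h1
    have heq : (fun R : ℝ => max (I R) (u₀ - R) / R)
        =ᶠ[atTop] fun R => max (I R / R) ((u₀ - R) / R) := by
      filter_upwards [eventually_gt_atTop (0 : ℝ)] with R hR
      rw [← max_div_div_right hR.le]
    rw [tendsto_congr' heq]
    simpa using h2
  have hBR : Tendsto (fun R => B R / R) atTop (nhds 0) := by
    have heq : (fun R => B R / R) =ᶠ[atTop]
        fun R => θ * (max (I R) (u₀ - R) / R) + (θ - 1) * (1 / R - I (4 * R) / R) := by
      filter_upwards [eventually_gt_atTop (0 : ℝ)] with R hR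
      simp only [hB]
      field_simp
    rw [tendsto_congr' heq]
    have h3 : Tendsto (fun R : ℝ => 1 / R - I (4 * R) / R) atTop (nhds 0) := by
      simpa using hone.sub hI4
    simpa using (hmax.const_mul θ).add (h3.const_mul (θ - 1))
  -- eventually B R < u₀ + R
  have hsmall : ∀ᶠ R in atTop, B R / R < 1 / 2 :=
    hBR.eventually (eventually_lt_nhds (by norm_num : (0:ℝ) < 1/2))
  have hu : ∀ᶠ R in atTop, (-1 : ℝ)/2 < u₀ / R :=
    hinv.eventually (eventually_gt_nhds (by norm_num : (-1:ℝ)/2 < 0))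
  have hSB : ∀ᶠ R in atTop, S R ≤ B R := by
    filter_upwards [hsmall, hu, eventually_gt_atTop (0 : ℝ)] with R h1 h2 hR
    have hBlt : B R < u₀ + R := by
      have hb : B R < R / 2 := by
        have := (div_lt_iff₀ hR).mp h1
        linarith
      have hub : -(R / 2) < u₀ := by
        have := (lt_div_iff₀ hR).mp h2
        linarith
      calc B R < R / 2 := hb
        _ ≤ u₀ + R := by linarith
    rcases le_total (S R) (u₀ + R) with h | h
    · calc S R = min (S R) (u₀ + R) := (min_eq_left h).symm
        _ ≤ B R := hHarnack R hR
    · exfalso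
      have hmin : u₀ + R ≤ B R := by
        have h' := hHarnack R hR
        rwa [min_eq_right h] at h'
      linarith
  refine tendsto_of_tendsto_of_tendsto_of_le_of_le' hinv hBR ?_ ?_
  · filter_upwards [eventually_gt_atTop (0 : ℝ)] with R hR
    exact div_le_div_of_nonneg_right (hSu R hR) hR.le
  · filter_upwards [hSB, eventually_gt_atTop (0 : ℝ)] with R h1 hR
    exact div_le_div_of_nonneg_right h1 hR.le
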